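/- Let ε > 0, let ν ∈ ℚ^N ∩ S^{N-1}, and let S ∈ SO(N) be a rotation with S e_N = ν. Then there exists a rotation R ∈ SO(N) with R e_i ∈ ℚ^N for all i, such that R e_N = ν and ‖R − S‖ < ε. -/

import Mathlib

/-!
The Cayley transform `B ↦ (1 - B)(1 + B)⁻¹` is continuous, commutes with `ℚ → ℝ`, and maps
skew-symmetric matrices onto the rotations without eigenvalue `-1`. Approximating the Cayley
preimage by rational skew matrices therefore approximates such a rotation by rational rotations,
and composing with a diagonal sign matrix reaches every orthogonal matrix. An approximation `C` of
`S` is then made to send `e_N` exactly to `ν` by the product of the reflections in `C e_N + ν` and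
in `ν`: it is rational, and it tends to the identity as `C` tends to `S`.
-/

open Filter Topology

namespace Matrix

variable {ι K L : Type*} [Fintype ι] [DecidableEq ι] [Field K] [Field L]

theorem map_nonsing_inv (A : Matrix ι ι K) (f : K →+* L) : A⁻¹.map f = (A.map f)⁻¹ := by
  by_cases h : IsUnit A.det
  · refine (inv_eq_left_inv ?_).symm
    rw [← Matrix.map_mul, nonsing_inv_mul _ h, Matrix.map_one _ f.map_zero f.map_one]
  · have h' : ¬ IsUnit (A.map f).det := by
      rwa [← RingHom.mapMatrix_apply, ← RingHom.map_det, isUnit_iff_ne_zero, map_ne_zero,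
        ← isUnit_iff_ne_zero]
    rw [nonsing_inv_apply_not_isUnit _ h, nonsing_inv_apply_not_isUnit _ h',
      Matrix.map_zero _ f.map_zero]

section CommRing

variable {R : Type*} [CommRing R] {A B : Matrix ι ι R}

theorem orthogonal_mul (hA : Aᵀ * A = 1) (hB : Bᵀ * B = 1) : (A * B)ᵀ * (A * B) = 1 := by
  rw [transpose_mul, Matrix.mul_assoc, ← Matrix.mul_assoc Aᵀ, hA, Matrix.one_mul, hB]

theorem dotProduct_mulVec_mulVec_of_orthogonal (hA : Aᵀ * A = 1) (v w : ι → R) :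
    A *ᵥ v ⬝ᵥ A *ᵥ w = v ⬝ᵥ w := by
  rw [dotProduct_mulVec, ← vecMul_transpose, vecMul_vecMul, hA, vecMul_one]

end CommRing

noncomputable def householder (u : ι → K) : Matrix ι ι K := 1 - (2 / (u ⬝ᵥ u)) • vecMulVec u u

theorem map_householder (u : ι → K) (f : K →+* L) :
    (householder u).map f = householder (f ∘ u) := by
  ext i j
  simp [householder, Matrix.one_apply, vecMulVec_apply, RingHom.map_dotProduct, apply_ite f,
    map_ofNat]

theorem transpose_householder (u : ι → K) : (householder u)ᵀ = householder u := by
  simp [householder, transpose_vecMulVec]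

theorem householder_mul_self (u : ι → K) : householder u * householder u = 1 := by
  have hsq : (2 / (u ⬝ᵥ u)) * (2 / (u ⬝ᵥ u)) * (u ⬝ᵥ u) = 2 / (u ⬝ᵥ u) + 2 / (u ⬝ᵥ u) := by
    rcases eq_or_ne (u ⬝ᵥ u) 0 with h | h
    · simp [h]
    · field_simp; ring
  simp only [householder, sub_mul, mul_sub, Matrix.one_mul, Matrix.mul_one, smul_mul_smul,
    vecMulVec_mul_vecMulVec, vecMulVec_smul, smul_smul, hsq, add_smul]
  abel

theorem householder_orthogonal (u : ι → K) : (householder u)ᵀ * householder u = 1 := by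
  rw [transpose_householder, householder_mul_self]

theorem householder_mulVec (u v : ι → K) :
    householder u *ᵥ v = v - (2 * (u ⬝ᵥ v) / (u ⬝ᵥ u)) • u := by
  ext i
  simp [householder, sub_mulVec, smul_mulVec, vecMulVec_mulVec]
  ring

theorem householder_mulVec_self {u : ι → K} (hu : u ⬝ᵥ u ≠ 0) : householder u *ᵥ u = -u := by
  rw [householder_mulVec, mul_div_assoc, div_self hu]
  module

theorem householder_add_mulVec {v w : ι → K} (hvw : v ⬝ᵥ v = w ⬝ᵥ w)
    (h : (v + w) ⬝ᵥ (v + w) ≠ 0) : householder (v + w) *ᵥ v = -w := by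
  have hvv : (v + w) ⬝ᵥ (v + w) = 2 * ((v + w) ⬝ᵥ v) := by
    simp only [add_dotProduct, dotProduct_add, hvw, dotProduct_comm w v]
    ring
  rw [householder_mulVec, hvv, div_self (hvv ▸ h), one_smul]
  abel

theorem householder_smul (u : ι → K) {a : K} (ha : a ≠ 0) :
    householder (a • u) = householder u := by
  ext i j
  simp [householder, vecMulVec_apply]
  field_simp

theorem det_householder {u : ι → K} (hu : u ⬝ᵥ u ≠ 0) : (householder u).det = -1 := by
  have := det_one_add_replicateCol_mul_replicateRow (ι := Unit) (-(2 / (u ⬝ᵥ u)) • u) u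
  rw [← vecMulVec_eq, smul_vecMulVec] at this
  rw [householder, sub_eq_add_neg, ← neg_smul, this, dotProduct_smul, smul_eq_mul, neg_mul,
    div_mul_cancel₀ _ hu]
  norm_num

noncomputable def cayley (A : Matrix ι ι K) : Matrix ι ι K := (1 - A) * (1 + A)⁻¹

theorem map_cayley (A : Matrix ι ι K) (f : K →+* L) : (cayley A).map f = cayley (A.map f) := by
  simp only [cayley, ← RingHom.mapMatrix_apply, map_mul, map_sub, map_one]
  rw [RingHom.mapMatrix_apply (M := (1 + A)⁻¹), map_nonsing_inv, ← RingHom.mapMatrix_apply,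
    map_add, map_one]

theorem cayley_nonsing_inv {A : Matrix ι ι K} (hA : IsUnit A.det) : cayley A⁻¹ = -cayley A := by
  have h1 : 1 + A⁻¹ = (A + 1) * A⁻¹ := by
    rw [Matrix.add_mul, Matrix.mul_nonsing_inv _ hA, Matrix.one_mul, add_comm]
  have h2 : 1 - A⁻¹ = (A - 1) * A⁻¹ := by
    rw [Matrix.sub_mul, Matrix.mul_nonsing_inv _ hA, Matrix.one_mul]
  rw [cayley, h1, h2, Matrix.mul_inv_rev, nonsing_inv_nonsing_inv _ hA, Matrix.mul_assoc,
    nonsing_inv_mul_cancel_left _ _ hA, cayley, add_comm, ← neg_sub, Matrix.neg_mul]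

section Cayley

variable {A : Matrix ι ι K}

theorem cayley_eq_inv_mul (hA : IsUnit (1 + A).det) : cayley A = (1 + A)⁻¹ * (1 - A) := calc
  cayley A = (1 + A)⁻¹ * ((1 + A) * (1 - A) * (1 + A)⁻¹) := by
    rw [Matrix.mul_assoc, nonsing_inv_mul_cancel_left _ _ hA, cayley]
  _ = (1 + A)⁻¹ * ((1 - A) * (1 + A) * (1 + A)⁻¹) := by
    congr 2; noncomm_ring
  _ = (1 + A)⁻¹ * (1 - A) := by rw [mul_nonsing_inv_cancel_right _ _ hA]

theorem transpose_cayley (hA : IsUnit (1 + A).det) : (cayley A)ᵀ = cayley Aᵀ := by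
  rw [cayley_eq_inv_mul hA, transpose_mul, transpose_nonsing_inv, cayley]
  simp

theorem cayley_cayley [NeZero (2 : K)] (hA : IsUnit (1 + A).det) : cayley (cayley A) = A := by
  have h1 : 1 + cayley A = (2 : K) • (1 + A)⁻¹ := calc
    1 + cayley A = ((1 + A) + (1 - A)) * (1 + A)⁻¹ := by
      rw [Matrix.add_mul _ _ (1 + A)⁻¹, mul_nonsing_inv _ hA, cayley]
    _ = (2 : K) • (1 + A)⁻¹ := by
      rw [show (1 + A) + (1 - A) = (2 : K) • (1 : Matrix ι ι K) by module, Matrix.smul_mul,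
        Matrix.one_mul]
  have h2 : 1 - cayley A = (2 : K) • (A * (1 + A)⁻¹) := calc
    1 - cayley A = ((1 + A) - (1 - A)) * (1 + A)⁻¹ := by
      rw [Matrix.sub_mul _ _ (1 + A)⁻¹, mul_nonsing_inv _ hA, cayley]
    _ = (2 : K) • (A * (1 + A)⁻¹) := by
      rw [show (1 + A) - (1 - A) = (2 : K) • A by module, Matrix.smul_mul]
  have h3 : (1 + cayley A)⁻¹ = (2 : K)⁻¹ • (1 + A) := by
    refine inv_eq_left_inv ?_
    rw [h1, smul_mul_smul, inv_mul_cancel₀ two_ne_zero, one_smul, mul_nonsing_inv _ hA]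
  rw [cayley, h2, h3, smul_mul_smul, mul_inv_cancel₀ two_ne_zero, one_smul,
    nonsing_inv_mul_cancel_right _ _ hA]

theorem transpose_cayley_of_orthogonal (hA : IsUnit (1 + A).det) (hU : Aᵀ * A = 1) :
    (cayley A)ᵀ = -cayley A := by
  rw [transpose_cayley hA, ← inv_eq_left_inv hU, cayley_nonsing_inv (isUnit_det_of_left_inverse hU)]

end Cayley

section OrderedField

variable [LinearOrder K] [IsStrictOrderedRing K] {B : Matrix ι ι K}

theorem isUnit_det_one_add_of_transpose_eq_neg (hB : Bᵀ = -B) : IsUnit (1 + B).det := by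
  rw [isUnit_iff_ne_zero]
  intro h
  obtain ⟨v, hv, hBv⟩ := exists_mulVec_eq_zero_iff.mpr h
  have hskew : v ⬝ᵥ B *ᵥ v = -(v ⬝ᵥ B *ᵥ v) := by
    conv_lhs => rw [dotProduct_mulVec, ← mulVec_transpose, hB, neg_mulVec, neg_dotProduct,
      dotProduct_comm]
  have hvv : v ⬝ᵥ v = 0 := by
    have := congrArg (v ⬝ᵥ ·) hBv
    simp only [add_mulVec, one_mulVec, dotProduct_add, dotProduct_zero] at this
    linarith
  exact hv (dotProduct_self_eq_zero.mp hvv)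

theorem cayley_orthogonal_of_transpose_eq_neg (hB : Bᵀ = -B) :
    (cayley B)ᵀ * cayley B = 1 := by
  have hnegB : (-B)ᵀ = -(-B) := by rw [transpose_neg, hB]
  have h₁ := isUnit_det_one_add_of_transpose_eq_neg hB
  have h₂ : IsUnit (1 - B).det := by
    simpa [sub_eq_add_neg] using isUnit_det_one_add_of_transpose_eq_neg hnegB
  rw [transpose_cayley h₁, hB, cayley, cayley, sub_neg_eq_add, ← sub_eq_add_neg,
    Matrix.mul_assoc, nonsing_inv_mul_cancel_left _ _ h₂, mul_nonsing_inv _ h₁]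

theorem det_cayley_of_transpose_eq_neg (hB : Bᵀ = -B) : (cayley B).det = 1 := by
  have h₁ := isUnit_det_one_add_of_transpose_eq_neg hB
  have h₂ : 1 - B = (1 + B)ᵀ := by rw [transpose_add, transpose_one, hB, sub_eq_add_neg]
  rw [cayley, h₂, det_mul, det_transpose, ← det_mul, mul_nonsing_inv _ h₁, det_one]

end OrderedField

theorem det_add_diagonal_cons {m : ℕ} (A : Matrix (Fin (m + 1)) (Fin (m + 1)) K)
    (s : K) (d : Fin m → K) :
    (A + diagonal (Fin.cons s d)).det =
      (A + diagonal (Fin.cons 0 d)).det + s * (A.submatrix Fin.succ Fin.succ + diagonal d).det := by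
  have hminor : ∀ (t : K) (j : Fin (m + 1)),
      (A + diagonal (Fin.cons t d)).submatrix Fin.succ j.succAbove =
        (A + diagonal (Fin.cons 0 d)).submatrix Fin.succ j.succAbove := by
    intro t j
    ext k l
    simp [diagonal_apply]
  have hrow : ∀ j, (A + diagonal (Fin.cons s d)) 0 j =
      (A + diagonal (Fin.cons 0 d)) 0 j + (Pi.single 0 s : Fin (m + 1) → K) j := by
    intro j
    rcases Fin.eq_zero_or_eq_succ j with rfl | ⟨k, rfl⟩ <;>
      simp [(Fin.succ_ne_zero _).symm]
  have hsub : (A + diagonal (Fin.cons 0 d)).submatrix Fin.succ Fin.succ =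
      A.submatrix Fin.succ Fin.succ + diagonal d := by
    ext k l
    simp [diagonal_apply]
  rw [det_succ_row_zero, det_succ_row_zero (A + diagonal (Fin.cons 0 d))]
  simp_rw [hminor s, hrow, mul_add, add_mul, Finset.sum_add_distrib, add_right_inj]
  rw [Fintype.sum_eq_single 0 (fun j hj => by simp [hj]), Fin.succAbove_zero, hsub]
  simp

theorem exists_sign_det_add_diagonal_ne_zero_fin [NeZero (2 : K)] :
    ∀ {m : ℕ} (A : Matrix (Fin m) (Fin m) K),
      ∃ d : Fin m → K, (∀ i, d i = 1 ∨ d i = -1) ∧ (A + diagonal d).det ≠ 0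
  | 0, A => ⟨0, finZeroElim, by simp⟩
  | m + 1, A => by
    obtain ⟨d, hd, hdet⟩ := exists_sign_det_add_diagonal_ne_zero_fin (A.submatrix Fin.succ Fin.succ)
    have hsign : ∀ s : K, (s = 1 ∨ s = -1) → ∀ i, (Fin.cons s d : Fin (m + 1) → K) i = 1 ∨
        (Fin.cons s d : Fin (m + 1) → K) i = -1 := fun s hs i => Fin.cases hs hd i
    by_contra! h
    have h₁ := det_add_diagonal_cons A 1 d
    have h₂ := det_add_diagonal_cons A (-1) d
    rw [h _ (hsign 1 (.inl rfl))] at h₁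
    rw [h _ (hsign (-1) (.inr rfl))] at h₂
    refine hdet (mul_left_cancel₀ (two_ne_zero (α := K)) ?_)
    linear_combination h₂ - h₁

theorem exists_sign_det_add_diagonal_ne_zero [NeZero (2 : K)] (A : Matrix ι ι K) :
    ∃ d : ι → K, (∀ i, d i = 1 ∨ d i = -1) ∧ (A + diagonal d).det ≠ 0 := by
  let e := Fintype.equivFin ι
  obtain ⟨d, hd, hdet⟩ := exists_sign_det_add_diagonal_ne_zero_fin (reindex e e A)
  refine ⟨d ∘ e, fun i => hd (e i), ?_⟩
  have h : reindex e e (A + diagonal (d ∘ e)) = reindex e e A + diagonal d := by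
    ext i j
    simp [diagonal_apply]
  rwa [← det_reindex_self e, h]

section Topology

variable [TopologicalSpace K] [IsTopologicalDivisionRing K]

theorem continuousAt_householder {u : ι → K} (hu : u ⬝ᵥ u ≠ 0) : ContinuousAt householder u := by
  unfold householder
  fun_prop (disch := exact hu)

theorem continuousAt_cayley {A : Matrix ι ι K} (hA : IsUnit (1 + A).det) :
    ContinuousAt cayley A := by
  have hinv : ContinuousAt Inv.inv (1 + A) := by
    refine continuousAt_matrix_inv _ ?_
    rw [Ring.inverse_eq_inv']
    exact continuousAt_inv₀ hA.ne_zero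
  exact (continuousAt_const.sub continuousAt_id).mul
    (hinv.comp (continuousAt_const.add continuousAt_id))

theorem tendsto_householder_mul_householder_mul [NeZero (2 : K)] {S : Matrix ι ι K} {x : ι → K}
    (hx : S *ᵥ x ⬝ᵥ S *ᵥ x ≠ 0) :
    Tendsto (fun X => householder (S *ᵥ x) * householder (X *ᵥ x + S *ᵥ x) * X) (𝓝 S) (𝓝 S) := by
  set v := S *ᵥ x
  have h2v : (v + v) ⬝ᵥ (v + v) ≠ 0 := by
    rw [← two_smul K v, dotProduct_smul, smul_dotProduct, smul_eq_mul, smul_eq_mul]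
    exact mul_ne_zero two_ne_zero (mul_ne_zero two_ne_zero hx)
  have hcont : ContinuousAt (fun X => householder v * householder (X *ᵥ x + v) * X) S :=
    (continuousAt_const.mul ((continuousAt_householder h2v).comp
      (f := fun X => X *ᵥ x + v) (by fun_prop))).mul continuousAt_id
  have hS : householder v * householder (S *ᵥ x + v) * S = S := by
    rw [← two_smul K v, householder_smul v two_ne_zero, householder_mul_self, Matrix.one_mul]
  simpa only [hS] using hcont.tendsto

end Topology

end Matrix

open Matrix

section RationalMatrices

variable {ι : Type*} [Fintype ι] [DecidableEq ι]

noncomputable def ratMatrices (ι : Type*) [Fintype ι] [DecidableEq ι] : Subring (Matrix ι ι ℝ) :=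
  (Rat.castHom ℝ).mapMatrix.range

theorem mem_ratMatrices {A : Matrix ι ι ℝ} : A ∈ ratMatrices ι ↔ ∀ i j, ∃ q : ℚ, A i j = q := by
  constructor
  · rintro ⟨Q, rfl⟩ i j
    exact ⟨Q i j, rfl⟩
  · intro h
    choose Q hQ using h
    exact ⟨Matrix.of Q, by ext i j; exact (hQ i j).symm⟩

theorem dense_ratMatrices : Dense (ratMatrices ι : Set (Matrix ι ι ℝ)) :=
  DenseRange.piMap fun _ => DenseRange.piMap fun _ => Rat.denseRange_cast

theorem householder_mem_ratMatrices {u : ι → ℝ} (hu : ∀ i, ∃ q : ℚ, u i = q) :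
    householder u ∈ ratMatrices ι := by
  choose q hq using hu
  obtain rfl : u = Rat.castHom ℝ ∘ q := funext hq
  exact ⟨householder q, map_householder q _⟩

theorem cayley_mem_ratMatrices {A : Matrix ι ι ℝ} (hA : A ∈ ratMatrices ι) :
    cayley A ∈ ratMatrices ι := by
  obtain ⟨Q, rfl⟩ := hA
  exact ⟨cayley Q, map_cayley Q _⟩

theorem exists_rat_mulVec_of_mem_ratMatrices {A : Matrix ι ι ℝ} (hA : A ∈ ratMatrices ι)
    {x : ι → ℝ} (hx : ∀ i, ∃ q : ℚ, x i = q) (i : ι) : ∃ q : ℚ, (A *ᵥ x) i = q := by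
  obtain ⟨Q, rfl⟩ := hA
  choose p hp using hx
  obtain rfl : x = Rat.castHom ℝ ∘ p := funext hp
  exact ⟨(Q *ᵥ p) i, (RingHom.map_mulVec _ Q p i).symm⟩

theorem frequently_ratMatrices_cayley {B : Matrix ι ι ℝ} (hB : Bᵀ = -B) :
    ∃ᶠ C in 𝓝 (cayley B), C ∈ ratMatrices ι ∧ Cᵀ * C = 1 ∧ C.det = 1 := by
  let B₀ := (2⁻¹ : ℝ) • B
  have hB₀ : B₀ - B₀ᵀ = B := by
    simp only [B₀, transpose_smul, hB]
    module
  have hskew : ∀ X : Matrix ι ι ℝ, (X - Xᵀ)ᵀ = -(X - Xᵀ) := fun X => by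
    rw [transpose_sub, transpose_transpose, neg_sub]
  have hcont : Tendsto (fun X => cayley (X - Xᵀ)) (𝓝 B₀) (𝓝 (cayley B)) := by
    rw [← hB₀]
    exact ((continuousAt_cayley (isUnit_det_one_add_of_transpose_eq_neg (hskew B₀))).comp
      (f := fun X => X - Xᵀ) (by fun_prop)).tendsto
  refine hcont.frequently ((mem_closure_iff_frequently.mp (dense_ratMatrices B₀)).mono ?_)
  intro X hX
  refine ⟨cayley_mem_ratMatrices ?_, cayley_orthogonal_of_transpose_eq_neg (hskew X),
    det_cayley_of_transpose_eq_neg (hskew X)⟩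
  obtain ⟨Q, rfl⟩ := hX
  exact ⟨Q - Qᵀ, by simp [Matrix.map_sub, transpose_map]⟩

theorem frequently_ratMatrices_orthogonal {T : Matrix ι ι ℝ} (hT : Tᵀ * T = 1) :
    ∃ᶠ C in 𝓝 T, C ∈ ratMatrices ι ∧ Cᵀ * C = 1 ∧ C.det = T.det := by
  obtain ⟨d, hd, hdet⟩ := exists_sign_det_add_diagonal_ne_zero T
  set D := diagonal d
  have hDD : D * D = 1 := by
    rw [diagonal_mul_diagonal, ← diagonal_one]
    congr 1
    funext i
    rcases hd i with h | h <;> simp [h]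
  have hD : Dᵀ * D = 1 := by rw [diagonal_transpose, hDD]
  have hDrat : D ∈ ratMatrices ι := mem_ratMatrices.mpr fun i j => by
    rcases eq_or_ne i j with rfl | hij
    · rcases hd i with h | h
      · exact ⟨1, by simp [D, h]⟩
      · exact ⟨-1, by simp [D, h]⟩
    · exact ⟨0, by simp [D, hij]⟩
  set U := D * T
  have hU : Uᵀ * U = 1 := orthogonal_mul hD hT
  have hU₁ : IsUnit (1 + U).det := by
    rw [isUnit_iff_ne_zero, show 1 + U = D * (T + D) by
      rw [Matrix.mul_add, hDD, add_comm], det_mul]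
    exact mul_ne_zero (isUnit_det_of_left_inverse hDD).ne_zero hdet
  have hB := transpose_cayley_of_orthogonal hU₁ hU
  have hUdet : U.det = 1 := cayley_cayley hU₁ ▸ det_cayley_of_transpose_eq_neg hB
  have hDU : D * U = T := by rw [← Matrix.mul_assoc, hDD, Matrix.one_mul]
  have hmul : Tendsto (D * ·) (𝓝 U) (𝓝 T) :=
    hDU ▸ (continuous_const.mul continuous_id).tendsto U
  refine hmul.frequently ((cayley_cayley hU₁ ▸ frequently_ratMatrices_cayley hB).mono ?_)
  rintro C ⟨hCrat, hC, hCdet⟩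
  refine ⟨mul_mem hDrat hCrat, orthogonal_mul hD hC, ?_⟩
  rw [← hDU, det_mul, det_mul, hCdet, hUdet]

theorem frequently_ratMatrices_orthogonal_mulVec_eq {S : Matrix ι ι ℝ} (hS : Sᵀ * S = 1)
    {x : ι → ℝ} (hx : x ≠ 0) (hx_rat : ∀ i, ∃ q : ℚ, x i = q)
    (hSx_rat : ∀ i, ∃ q : ℚ, (S *ᵥ x) i = q) :
    ∃ᶠ R in 𝓝 S, R ∈ ratMatrices ι ∧ Rᵀ * R = 1 ∧ R.det = S.det ∧ R *ᵥ x = S *ᵥ x := by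
  set v := S *ᵥ x
  have hvx : v ⬝ᵥ v = x ⬝ᵥ x := dotProduct_mulVec_mulVec_of_orthogonal hS x x
  have hv : v ⬝ᵥ v ≠ 0 := hvx ▸ mt dotProduct_self_eq_zero.mp hx
  have hne : ∀ᶠ X in 𝓝 S, X *ᵥ x + v ≠ 0 := by
    refine ContinuousAt.eventually_ne (g := fun X => X *ᵥ x + v) (by fun_prop) ?_
    rw [← two_smul ℝ v]
    exact smul_ne_zero two_ne_zero fun h => hv (by simp [h])
  refine (tendsto_householder_mul_householder_mul hv).frequently
    (((frequently_ratMatrices_orthogonal hS).and_eventually hne).mono ?_)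
  rintro C ⟨⟨hCrat, hC, hCdet⟩, hCx⟩
  have hCv : C *ᵥ x ⬝ᵥ C *ᵥ x = v ⬝ᵥ v := by
    rw [dotProduct_mulVec_mulVec_of_orthogonal hC, hvx]
  have hCx' : (C *ᵥ x + v) ⬝ᵥ (C *ᵥ x + v) ≠ 0 := mt dotProduct_self_eq_zero.mp hCx
  refine ⟨mul_mem (mul_mem (householder_mem_ratMatrices hSx_rat)
      (householder_mem_ratMatrices fun i => ?_)) hCrat,
    orthogonal_mul (orthogonal_mul (householder_orthogonal v) (householder_orthogonal _)) hC,
    ?_, ?_⟩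
  · obtain ⟨q, hq⟩ := exists_rat_mulVec_of_mem_ratMatrices hCrat hx_rat i
    obtain ⟨r, hr⟩ := hSx_rat i
    exact ⟨q + r, by rw [Pi.add_apply, hq, show (S *ᵥ x) i = r from hr, Rat.cast_add]⟩
  · rw [det_mul, det_mul, det_householder hv, det_householder hCx', hCdet]
    ring
  · rw [← mulVec_mulVec, ← mulVec_mulVec, householder_add_mulVec hCv hCx', mulVec_neg,
      householder_mulVec_self hv, neg_neg]

end RationalMatrices

theorem eventually_sqrt_sum_sq_sub_lt {m n : Type*} [Fintype m] [Fintype n] (S : Matrix m n ℝ)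
    {ε : ℝ} (hε : 0 < ε) : ∀ᶠ X in 𝓝 S, √(∑ i, ∑ j, (X i j - S i j) ^ 2) < ε := by
  have hcont : Continuous fun X : Matrix m n ℝ => √(∑ i, ∑ j, (X i j - S i j) ^ 2) := by
    fun_prop
  exact hcont.continuousAt.eventually (gt_mem_nhds (by simpa using hε))

theorem rational_rotations_dense_fixing_vector_general (n : ℕ) (ε : ℝ) (hε : 0 < ε)
    (ν : Fin (n + 1) → ℝ) (hrat : ∀ i, ∃ q : ℚ, ν i = q)
    (S : Matrix (Fin (n + 1)) (Fin (n + 1)) ℝ)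
    (hS : S.transpose * S = 1) (hdet : S.det = 1)
    (hSν : S.mulVec (Pi.single (Fin.last n) 1) = ν) :
    ∃ R : Matrix (Fin (n + 1)) (Fin (n + 1)) ℝ,
      R.transpose * R = 1 ∧ R.det = 1 ∧ (∀ i j, ∃ q : ℚ, R i j = q) ∧
      R.mulVec (Pi.single (Fin.last n) 1) = ν ∧
      Real.sqrt (∑ i, ∑ j, (R i j - S i j) ^ 2) < ε := by
  have he_rat : ∀ i, ∃ q : ℚ, (Pi.single (Fin.last n) 1 : Fin (n + 1) → ℝ) i = q :=
    fun i => ⟨(Pi.single (Fin.last n) 1 : Fin (n + 1) → ℚ) i, by simp [Pi.single_apply, apply_ite]⟩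
  obtain ⟨R, ⟨hRrat, hR, hRdet, hRe⟩, hRS⟩ :=
    ((frequently_ratMatrices_orthogonal_mulVec_eq hS (Pi.single_ne_zero_iff.mpr one_ne_zero) he_rat
      (hSν ▸ hrat)).and_eventually (eventually_sqrt_sum_sq_sub_lt S hε)).exists
  exact ⟨R, hR, hRdet.trans hdet, mem_ratMatrices.mp hRrat, hRe.trans hSν, hRS⟩

/-- rational rotations sending `e_N` to a prescribed rational unit
vector `ν` are dense among all rotations sending `e_N` to `ν`. -/
theorem rational_rotations_dense_fixing_vector (n : ℕ) (ε : ℝ) (hε : 0 < ε)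
    (ν : Fin (n + 1) → ℝ) (hrat : ∀ i, ∃ q : ℚ, ν i = q)
    (hunit : ∑ i, ν i ^ 2 = 1)
    (S : Matrix (Fin (n + 1)) (Fin (n + 1)) ℝ)
    (hS : S.transpose * S = 1) (hdet : S.det = 1)
    (hSν : S.mulVec (Pi.single (Fin.last n) 1) = ν) :
    ∃ R : Matrix (Fin (n + 1)) (Fin (n + 1)) ℝ,
      R.transpose * R = 1 ∧ R.det = 1 ∧ (∀ i j, ∃ q : ℚ, R i j = q) ∧
      R.mulVec (Pi.single (Fin.last n) 1) = ν ∧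
      Real.sqrt (∑ i, ∑ j, (R i j - S i j) ^ 2) < ε :=
  rational_rotations_dense_fixing_vector_general n ε hε ν hrat S hS hdet hSν
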